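/- Let L be a complete lattice, F : L → L ω-continuous, X₀ ≤ ⋯ ≤ X_{n−1} a KT sequence, and (Cᵢ, …, C_{n−1}) a partial Kleene sequence (0 < i ≤ n−1) with Cᵢ ≰ F(X_{i−1}). Then C cannot be extended to a conclusive Kleene sequence. -/
import Mathlib


def OmegaContinuous {L : Type*} [CompleteLattice L] (F : L → L) : Prop :=
  ∀ c : ℕ → L, Monotone c → F (⨆ n, c n) = ⨆ n, F (c n)

lemma omegaContinuous_monotone {L : Type*} [CompleteLattice L] {F : L → L}
    (hF : OmegaContinuous F) : Monotone F := by
  intro x y hxy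
  set c : ℕ → L := fun m => if m = 0 then x else y with hc
  have hmono : Monotone c := by
    intro a b hab
    simp only [hc]
    split_ifs with ha hb <;> simp_all [hxy, le_refl]
  have hsup : (⨆ m, c m) = y := by
    apply le_antisymm
    · exact iSup_le fun m => by by_cases h : m = 0 <;> simp [hc, h, hxy]
    · exact le_trans (by simp [hc]) (le_iSup c 1)
  have := hF c hmono
  rw [hsup] at this
  calc F x = F (c 0) := by simp [hc]
    _ ≤ ⨆ m, F (c m) := le_iSup (fun m => F (c m)) 0
    _ = F y := this.symm

/-- If `C i ≰ F (X (i-1))` for a KT sequence `X`, then the partial Kleene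
sequence `C` cannot be extended to a conclusive one. -/
theorem stmt14 {L : Type*} [CompleteLattice L] (F : L → L)
    (hF : OmegaContinuous F) (α : L) (n : ℕ) (X : ℕ → L)
    (hn : 2 ≤ n)
    (hchain : ∀ k, k + 1 < n → X k ≤ X (k + 1))
    (hXα : X (n - 2) ≤ α)
    (hXpre : ∀ k, k + 1 < n → F (X k) ≤ X (k + 1))
    (i : ℕ) (hi0 : 0 < i) (hin : i < n) (C : ℕ → L)
    (hstep : ∀ j, i < j → j < n → C j ≤ F (C (j - 1)))
    (hlast : ¬ C (n - 1) ≤ α)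
    (hCFX : ¬ C i ≤ F (X (i - 1))) :
    ¬ ∃ C' : ℕ → L, C' 0 = ⊥ ∧
        (∀ j, 1 ≤ j → j < n → C' j ≤ F (C' (j - 1))) ∧
        ¬ C' (n - 1) ≤ α ∧
        (∀ j, i ≤ j → j < n → C' j = C j) := by
  rintro ⟨C', h0, hstep', hlast', heq⟩
  have hmono := omegaContinuous_monotone hF
  have hle : ∀ k, k < n → C' k ≤ X k := by
    intro k
    induction k with
    | zero => intro _; simp [h0]
    | succ k ih =>
      intro hk
      have hk' : k < n := Nat.lt_of_succ_lt hk
      calc C' (k + 1) ≤ F (C' (k + 1 - 1)) := hstep' (k + 1) (Nat.succ_le_succ (Nat.zero_le k)) hk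
        _ = F (C' k) := by simp
        _ ≤ F (X k) := hmono (ih hk')
        _ ≤ X (k + 1) := hXpre k hk
  apply hCFX
  have hi1 : i - 1 < n := lt_of_le_of_lt (Nat.sub_le i 1) hin
  calc C i = C' i := (heq i le_rfl hin).symm
    _ ≤ F (C' (i - 1)) := hstep' i hi0 hin
    _ ≤ F (X (i - 1)) := hmono (hle (i - 1) hi1)
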